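/- Let X₁, …, Xₙ be i.i.d. random variables, each exponentially distributed with mean μ > 0 (i.e., exponential with rate 1/μ). Define the estimator μ̂ = (∑_{i=1}^n Xᵢ)/n. Then for every ε ∈ (0,1), the probability Pr{ |μ̂ − μ| / μ < ε } is at least g(n, n(1+ε)/(1+2ε)) − g(n, n(1+ε)), where g(m, x) = e^{−x} ∑_{i=0}^{m−1} xⁱ/i!. -/

import Mathlib

open MeasureTheory ProbabilityTheory

/-- `g m x = e^{-x} ∑_{i=0}^{m-1} x^i / i!`. -/
noncomputable def g (m : ℕ) (x : ℝ) : ℝ :=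
  Real.exp (-x) * ∑ i ∈ Finset.range m, x ^ i / (Nat.factorial i)

/-!
The sum `S` of `n` i.i.d. exponential variables of rate `r = 1/μ` has the Erlang law
`gammaMeasure n r`: convolving `gammaPDF a r` with the exponential density raises the shape by one.
For integer shape, `x ↦ -g n (r x)` is an antiderivative of the density, so
`ℙ(a < S < b) = g n (r a) - g n (r b)`. With `a = nμ(1+ε)/(1+2ε) ≥ nμ(1-ε)` and `b = nμ(1+ε)`,
the event `a < S < b` is contained in `|S/n - μ|/μ < ε`.
-/

open Real Set
open scoped ENNReal Nat

lemma gammaPDF_mul_exponentialPDF_neg_add {a r : ℝ} (ha : 0 < a) (hr : 0 < r) {s t : ℝ} :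
    gammaPDF a r s * exponentialPDF r (-s + t) = (Icc 0 t).indicator
      (fun s ↦ ENNReal.ofReal (r ^ (a + 1) / Gamma a * exp (-(r * t)) * s ^ (a - 1))) s := by
  by_cases hs : s ∈ Icc 0 t
  · have := Gamma_pos_of_pos ha
    have := hs.1
    rw [indicator_of_mem hs, gammaPDF_of_nonneg hs.1,
      exponentialPDF_of_nonneg (by linarith [hs.2]), ← ENNReal.ofReal_mul (by positivity),
      rpow_add_one hr.ne']
    congr 1
    rw [show -(r * t) = -(r * s) + -(r * (-s + t)) by ring, exp_add]
    ring
  · rw [indicator_of_notMem hs]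
    rcases not_and_or.mp hs with hs | hts
    · rw [gammaPDF_of_neg (not_le.mp hs), zero_mul]
    · rw [exponentialPDF_of_neg (by linarith [not_le.mp hts]), mul_zero]

lemma gammaPDF_lconvolution_exponentialPDF {a r : ℝ} (ha : 0 < a) (hr : 0 < r) :
    gammaPDF a r ⋆ₗ exponentialPDF r = gammaPDF (a + 1) r := by
  ext t
  simp only [lconvolution_def, gammaPDF_mul_exponentialPDF_neg_add ha hr]
  rw [lintegral_indicator measurableSet_Icc]
  rcases lt_or_ge t 0 with ht | ht
  · rw [Icc_eq_empty (by linarith), Measure.restrict_empty, lintegral_zero_measure,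
      gammaPDF_of_neg ht]
  have hint : IntervalIntegrable (fun s : ℝ ↦ s ^ (a - 1)) volume 0 t :=
    intervalIntegral.intervalIntegrable_rpow' (by linarith)
  rw [gammaPDF_of_nonneg ht, ← ofReal_integral_eq_lintegral_ofReal, integral_Icc_eq_integral_Ioc,
    ← intervalIntegral.integral_of_le ht, intervalIntegral.integral_const_mul,
    integral_rpow (Or.inl (by linarith)), Gamma_add_one ha.ne', sub_add_cancel,
    zero_rpow ha.ne', sub_zero, add_sub_cancel_right]
  · congr 1
    field_simp
  · exact ((intervalIntegrable_iff_integrableOn_Icc_of_le ht).mp hint).const_mul _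
  · filter_upwards [ae_restrict_mem measurableSet_Icc] with s hs
    have := hs.1
    positivity

lemma gammaMeasure_conv_expMeasure {a r : ℝ} (ha : 0 < a) (hr : 0 < r) :
    gammaMeasure a r ∗ expMeasure r = gammaMeasure (a + 1) r := by
  rw [gammaMeasure, expMeasure, gammaMeasure, gammaMeasure, conv_withDensity_eq_lconvolution
    (f := gammaPDF a r) (g := gammaPDF 1 r) (measurable_gammaPDFReal a r).ennreal_ofReal
    (measurable_gammaPDFReal 1 r).ennreal_ofReal]
  exact congrArg _ (gammaPDF_lconvolution_exponentialPDF ha hr)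

lemma map_sum_eq_gammaMeasure {Ω ι : Type*} [MeasurableSpace Ω] {P : Measure Ω}
    [IsProbabilityMeasure P] {X : ι → Ω → ℝ} (hX : ∀ i, Measurable (X i))
    (hindep : iIndepFun X P) {r : ℝ} (hr : 0 < r) (hexp : ∀ i, P.map (X i) = expMeasure r)
    {s : Finset ι} (hs : s.Nonempty) :
    P.map (∑ i ∈ s, X i) = gammaMeasure s.card r := by
  classical
  induction hs using Finset.Nonempty.cons_induction with
  | singleton i => simpa [expMeasure] using hexp i
  | cons i s hi hs ih =>
    rw [Finset.sum_cons, add_comm, IndepFun.map_add_eq_map_conv_map (by fun_prop) (hX i)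
      (hindep.indepFun_finsetSum_of_notMem hX hi), ih, hexp, Finset.card_cons, Nat.cast_succ,
      gammaMeasure_conv_expMeasure (by simpa using hs.card_pos) hr]

lemma hasDerivAt_sum_range_pow_div_factorial (m : ℕ) (y : ℝ) :
    HasDerivAt (fun y : ℝ ↦ ∑ i ∈ Finset.range (m + 1), y ^ i / (i ! : ℝ))
      (∑ i ∈ Finset.range m, y ^ i / (i ! : ℝ)) y := by
  induction m with
  | zero => simpa using hasDerivAt_const y (1 : ℝ)
  | succ m ih =>
    simp only [Finset.sum_range_succ _ (m + 1)]
    refine (ih.fun_add ((hasDerivAt_pow (m + 1) y).div_const ((m + 1)! : ℝ))).congr_deriv ?_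
    rw [Finset.sum_range_succ, Nat.factorial_succ]
    push_cast
    field_simp

lemma hasDerivAt_g (m : ℕ) (y : ℝ) :
    HasDerivAt (g (m + 1)) (-(exp (-y) * y ^ m / m !)) y := by
  have hexp : HasDerivAt (fun y ↦ exp (-y)) (-exp (-y)) y := by
    simpa using (hasDerivAt_neg y).exp
  refine (hexp.mul (hasDerivAt_sum_range_pow_div_factorial m y)).congr_deriv ?_
  rw [Finset.sum_range_succ]
  ring

lemma gammaPDFReal_natCast_add_one (m : ℕ) (r : ℝ) {x : ℝ} (hx : 0 ≤ x) :
    gammaPDFReal (m + 1) r x = r * (exp (-(r * x)) * (r * x) ^ m / m !) := by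
  rw [gammaPDFReal, if_pos hx, add_sub_cancel_right, Gamma_nat_eq_factorial]
  norm_cast
  ring

lemma hasDerivAt_neg_g_mul (m : ℕ) (r : ℝ) {x : ℝ} (hx : 0 ≤ x) :
    HasDerivAt (fun x ↦ -g (m + 1) (r * x)) (gammaPDFReal (m + 1) r x) x := by
  refine ((hasDerivAt_g m (r * x)).comp x ((hasDerivAt_id x).const_mul r)).neg.congr_deriv ?_
  rw [gammaPDFReal_natCast_add_one m r hx]
  simp only [mul_one, neg_mul, neg_neg]
  ring

lemma gammaMeasure_natCast_add_one_Ioo (m : ℕ) {r a b : ℝ} (hr : 0 < r) (ha : 0 ≤ a)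
    (hab : a ≤ b) :
    gammaMeasure (m + 1) r (Ioo a b) = ENNReal.ofReal (g (m + 1) (r * a) - g (m + 1) (r * b)) := by
  have hcont : ContinuousOn (gammaPDFReal (m + 1) r) (uIcc a b) := by
    rw [uIcc_of_le hab]
    exact ContinuousOn.congr (f := fun x ↦ r * (exp (-(r * x)) * (r * x) ^ m / m !))
      (by fun_prop) fun x hx ↦ gammaPDFReal_natCast_add_one m r (ha.trans hx.1)
  have hint : IntegrableOn (gammaPDFReal (m + 1) r) (Ioo a b) :=
    hcont.integrableOn_uIcc.mono_set (Ioo_subset_Icc_self.trans Icc_subset_uIcc)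
  rw [gammaMeasure, withDensity_apply _ measurableSet_Ioo]
  unfold gammaPDF
  rw [← ofReal_integral_eq_lintegral_ofReal hint
      (ae_of_all _ (gammaPDFReal_nonneg (by positivity) hr)),
    ← integral_Ioc_eq_integral_Ioo, ← intervalIntegral.integral_of_le hab,
    intervalIntegral.integral_eq_sub_of_hasDerivAt
      (fun x hx ↦ hasDerivAt_neg_g_mul m r (ha.trans (uIcc_of_le hab ▸ hx).1))
      hcont.intervalIntegrable]
  ring_nf

lemma abs_div_sub_div_lt_of_mem_Ioo {n μ ε s : ℝ} (hn : 0 < n) (hμ : 0 < μ) (hε : 0 < ε)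
    (hs : s ∈ Ioo (n * μ * (1 + ε) / (1 + 2 * ε)) (n * μ * (1 + ε))) :
    |s / n - μ| / μ < ε := by
  obtain ⟨hlo, hhi⟩ := hs
  rw [div_lt_iff₀ (by positivity)] at hlo
  rw [div_lt_iff₀ hμ, abs_lt, lt_sub_iff_add_lt, sub_lt_iff_lt_add, lt_div_iff₀ hn,
    div_lt_iff₀ hn]
  constructor <;> nlinarith [mul_pos (mul_pos hn hμ) (mul_pos hε hε)]

/-- If `X₁, …, Xₙ` are i.i.d. exponential with mean `μ > 0` (rate `1/μ`) and
`μ̂ = (∑ Xᵢ)/n`, then for every `ε ∈ (0,1)`,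
`Pr{|μ̂ - μ|/μ < ε} ≥ g(n, n(1+ε)/(1+2ε)) - g(n, n(1+ε))`. -/
theorem service_time_estimate_prob_ge
    {Ω : Type*} [MeasureSpace Ω] [IsProbabilityMeasure (ℙ : Measure Ω)]
    (n : ℕ) (hn : 0 < n) (μ : ℝ) (hμ : 0 < μ)
    (X : Fin n → Ω → ℝ) (hmeas : ∀ i, Measurable (X i))
    (hindep : iIndepFun X ℙ)
    (hdist : ∀ i, Measure.map (X i) ℙ = expMeasure (1 / μ))
    (ε : ℝ) (hε : ε ∈ Set.Ioo (0 : ℝ) 1) :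
    (ℙ {ω | |(∑ i, X i ω) / n - μ| / μ < ε}).toReal
      ≥ g n ((n : ℝ) * (1 + ε) / (1 + 2 * ε)) - g n ((n : ℝ) * (1 + ε)) := by
  obtain ⟨m, rfl⟩ := Nat.exists_eq_add_one_of_ne_zero hn.ne'
  have hε0 := hε.1
  set a := (m + 1 : ℕ) * μ * (1 + ε) / (1 + 2 * ε)
  set b := (m + 1 : ℕ) * μ * (1 + ε)
  have hab : a ≤ b := div_le_self (by positivity) (by linarith)
  have hsum : Measure.map (fun ω ↦ ∑ i, X i ω) ℙ = gammaMeasure (m + 1) (1 / μ) := by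
    simpa [Finset.sum_fn] using
      map_sum_eq_gammaMeasure hmeas hindep (by positivity) hdist Finset.univ_nonempty
  have hprob : ℙ ((fun ω ↦ ∑ i, X i ω) ⁻¹' Ioo a b)
      = ENNReal.ofReal (g (m + 1) ((m + 1 : ℕ) * (1 + ε) / (1 + 2 * ε))
          - g (m + 1) ((m + 1 : ℕ) * (1 + ε))) := by
    rw [← Measure.map_apply (by fun_prop) measurableSet_Ioo, hsum,
      gammaMeasure_natCast_add_one_Ioo m (by positivity) (by positivity) hab]
    congr 3 <;> simp only [a, b] <;> field_simp
  rw [ge_iff_le, ← ENNReal.ofReal_le_iff_le_toReal (measure_ne_top _ _), ← hprob]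
  exact measure_mono fun ω hω ↦ abs_div_sub_div_lt_of_mem_Ioo (by positivity) hμ hε0 hω
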